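/- Let d ≥ 2, let J be an arbitrary d×d complex matrix, and let φ, ξ ∈ ℂ^d be unit vectors. Then ∫ ⟨ξ, V J Vᴴ φ⟩ · ⟨φ, V J Vᴴ ξ⟩ dμ(V) = ( (Tr J)² · |⟨φ, ξ⟩|² + Tr(J²) )/(d² − 1) − ( Tr(J²) · |⟨φ, ξ⟩|² + (Tr J)² )/( d·(d² − 1) ). -/

import Mathlib

/-!
Write `M = V J Vᴴ` and `T = ∫ M ⊗ M dμ(V)`. By invariance of `μ`, `T` commutes with every `W ⊗ W`,
`W` unitary. Testing this against diagonal phase matrices, permutation matrices and one reflection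
shows that `T = a • 1 + b • F`, where `F` is the flip `x ⊗ y ↦ y ⊗ x`. As `Tr (M ⊗ M) = (Tr M)²`
and `Tr ((M ⊗ M) F) = Tr (M²)`, the traces of `T` and `T F` give `a d² + b d = (Tr J)²` and
`a d + b d² = Tr (J²)`. Finally the integrand is `Tr ((M ⊗ M) (φ ξᴴ ⊗ ξ φᴴ))`, so the integral
is `Tr (T (φ ξᴴ ⊗ ξ φᴴ)) = a |⟨φ, ξ⟩|² + b`.
-/

open MeasureTheory Matrix

noncomputable instance (d : ℕ) : MeasurableSpace (Matrix.unitaryGroup (Fin d) ℂ) := borel _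
instance (d : ℕ) : BorelSpace (Matrix.unitaryGroup (Fin d) ℂ) := ⟨rfl⟩

open scoped Kronecker

theorem natCast_mul_sq_sub_one_ne_zero {n : ℕ} (hn : 1 < n) : (n : ℂ) * (n ^ 2 - 1) ≠ 0 := by
  refine mul_ne_zero (by exact_mod_cast (by omega : n ≠ 0)) (sub_ne_zero.2 ?_)
  exact_mod_cast (Nat.one_lt_pow two_ne_zero hn).ne'

@[fun_prop]
theorem Continuous.matrix_kronecker {X R l m n p : Type*} [TopologicalSpace X] [TopologicalSpace R]
    [Mul R] [ContinuousMul R] {A : X → Matrix l m R} {B : X → Matrix n p R} (hA : Continuous A)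
    (hB : Continuous B) : Continuous fun x => A x ⊗ₖ B x :=
  continuous_matrix fun _ _ => (hA.matrix_elem _ _).mul (hB.matrix_elem _ _)

namespace Matrix

section Permutations

variable {ι R : Type*} [Fintype ι] [DecidableEq ι]

def tensorSwap (ι R : Type*) [DecidableEq ι] [Zero R] [One R] : Matrix (ι × ι) (ι × ι) R :=
  Equiv.Perm.permMatrix R (Equiv.prodComm ι ι)

theorem tensorSwap_mul_tensorSwap [NonAssocSemiring R] : tensorSwap ι R * tensorSwap ι R = 1 := by
  rw [tensorSwap, ← permMatrix_mul, show Equiv.prodComm ι ι * Equiv.prodComm ι ι = 1 from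
    Equiv.ext Prod.swap_swap, permMatrix_one]

theorem trace_tensorSwap_mul_kronecker [CommSemiring R] (A B : Matrix ι ι R) :
    trace (tensorSwap ι R * (A ⊗ₖ B)) = trace (A * B) := by
  rw [tensorSwap, PEquiv.toMatrix_toPEquiv_mul]
  simp only [trace, diag_apply, submatrix_apply, id, Equiv.prodComm_apply, Fintype.sum_prod_type,
    Prod.fst_swap, Prod.snd_swap, kroneckerMap_apply, mul_apply]
  exact Finset.sum_comm

theorem trace_tensorSwap [CommSemiring R] : trace (tensorSwap ι R) = Fintype.card ι := by
  simpa using trace_tensorSwap_mul_kronecker (1 : Matrix ι ι R) 1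

omit [Fintype ι] in
theorem kronecker_permMatrix [MulZeroOneClass R] (σ τ : Equiv.Perm ι) :
    σ.permMatrix R ⊗ₖ τ.permMatrix R = Equiv.Perm.permMatrix R (σ.prodCongr τ) := by
  ext ⟨i, j⟩ ⟨k, l⟩
  simp only [kroneckerMap_apply, PEquiv.toMatrix_apply, Equiv.toPEquiv_apply, Option.mem_def,
    Option.some.injEq, Equiv.prodCongr_apply, Prod.map_apply, Prod.ext_iff]
  split_ifs <;> simp_all

theorem permMatrix_mem_unitaryGroup [CommRing R] [StarRing R] (σ : Equiv.Perm ι) :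
    σ.permMatrix R ∈ unitaryGroup ι R := by
  rw [mem_unitaryGroup_iff, star_eq_conjTranspose, conjTranspose_permMatrix, ← permMatrix_mul,
    inv_mul_cancel, permMatrix_one]

end Permutations

section Reflections

variable {ι R : Type*} [Fintype ι] [DecidableEq ι]

theorem one_sub_two_smul_vecMulVec_mem_unitaryGroup [CommRing R] [StarRing R] {v : ι → R}
    (hv : star v ⬝ᵥ v = 1) : 1 - (2 : R) • vecMulVec v (star v) ∈ unitaryGroup ι R := by
  set P := vecMulVec v (star v)
  have hP : P * P = P := by rw [vecMulVec_mul_vecMulVec, hv, one_smul]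
  have hPs : star P = P := by rw [star_eq_conjTranspose, conjTranspose_vecMulVec, star_star]
  rw [mem_unitaryGroup_iff, star_sub, star_one, star_smul, hPs, star_ofNat]
  calc (1 - (2 : R) • P) * (1 - (2 : R) • P) = 1 - (4 : R) • P + (4 : R) • (P * P) := by
        simp only [sub_mul, mul_sub, one_mul, mul_one, mul_smul_comm, smul_mul_assoc]
        module
    _ = 1 := by rw [hP]; module

theorem exists_mem_unitaryGroup_apply_mul_apply_ne_zero {i j : ι} (hij : i ≠ j) :
    ∃ W ∈ unitaryGroup ι ℂ, W i i * W i j ≠ 0 := by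
  set v : ι → ℂ := Pi.single i (3 / 5) + Pi.single j (4 / 5)
  have hv : star v ⬝ᵥ v = 1 := by
    simp [v, star_add, Pi.star_single, hij, hij.symm]
    norm_num
  refine ⟨_, one_sub_two_smul_vecMulVec_mem_unitaryGroup hv, ?_⟩
  simp [v, hij, hij.symm, vecMulVec_apply]
  norm_num

end Reflections

section Commutant

variable {ι : Type*} [Fintype ι] [DecidableEq ι]

def CommutesWithUnitaryKroneckerSquares (X : Matrix (ι × ι) (ι × ι) ℂ) : Prop :=
  ∀ W ∈ unitaryGroup ι ℂ, Commute (W ⊗ₖ W) X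

namespace CommutesWithUnitaryKroneckerSquares

variable {X : Matrix (ι × ι) (ι × ι) ℂ} (hX : CommutesWithUnitaryKroneckerSquares X)
include hX

theorem apply_eq_zero {p q : ι × ι} (h₁ : p ≠ q) (h₂ : p ≠ q.swap) : X p q = 0 := by
  by_contra hpq
  suffices s(p.1, p.2) = s(q.1, q.2) from (Sym2.mk_eq_mk_iff.1 this).elim h₁ h₂
  refine Sym2.ext fun m => ?_
  set z : ι → ℂ := fun k => if k = m then Complex.I else 1
  -- `z a * z b` is `1`, `I` or `-1` as `m` occurs `0`, `1` or `2` times in `(a, b)`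
  have hz : ∀ a b, z a * z b = 1 ↔ m ∉ s(a, b) := fun a b => by
    rw [Sym2.mem_iff, eq_comm (a := m), eq_comm (a := m)]
    simp only [z]
    split_ifs <;> norm_num [*, Complex.ext_iff]
  have hzU : diagonal z ∈ unitaryGroup ι ℂ := by
    rw [mem_unitaryGroup_iff, star_eq_conjTranspose, diagonal_conjTranspose,
      diagonal_mul_diagonal, ← diagonal_one]
    congr 1
    ext k
    by_cases hk : k = m <;> simp [z, hk]
  have h := congrFun₂ (hX _ hzU).eq p q
  rw [diagonal_kronecker_diagonal, diagonal_mul, mul_diagonal, mul_comm (X p q)] at h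
  rw [← not_iff_not, ← hz, ← hz, mul_right_cancel₀ hpq h]

theorem apply_perm (σ : Equiv.Perm ι) (i j k l : ι) :
    X (σ i, σ j) (σ k, σ l) = X (i, j) (k, l) := by
  have h := (hX _ (permMatrix_mem_unitaryGroup σ)).eq
  rw [kronecker_permMatrix, PEquiv.toMatrix_toPEquiv_mul, PEquiv.mul_toMatrix_toPEquiv] at h
  simpa using congrFun₂ h (i, j) (σ k, σ l)

theorem apply_diag {i j : ι} (hij : i ≠ j) :
    X (i, i) (i, i) = X (i, j) (i, j) + X (i, j) (j, i) := by
  obtain ⟨W, hW, hne⟩ := exists_mem_unitaryGroup_apply_mul_apply_ne_zero hij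
  have h := congrFun₂ (hX W hW).eq (i, i) (i, j)
  simp only [mul_apply, kroneckerMap_apply] at h
  rw [Fintype.sum_eq_add (i, j) (j, i) (by simp [hij]) fun r hr => by
      rw [hX.apply_eq_zero hr.1 hr.2, mul_zero],
    Fintype.sum_eq_single (i, i) fun s hs => by
      rw [hX.apply_eq_zero (Ne.symm hs) (by simpa [Prod.ext_iff, eq_comm, and_comm] using hs),
        zero_mul]] at h
  have hsymm : X (j, i) (i, j) = X (i, j) (j, i) := by
    simpa using hX.apply_perm (Equiv.swap i j) i j j i
  rw [hsymm] at h
  exact mul_left_cancel₀ hne (by linear_combination -h)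

theorem exists_eq_smul_one_add_smul_tensorSwap [Nontrivial ι] :
    ∃ a b : ℂ, X = a • 1 + b • tensorSwap ι ℂ := by
  obtain ⟨i₀, j₀, h₀⟩ := exists_pair_ne ι
  have offdiag : ∀ {i j}, i ≠ j →
      X (i, j) (i, j) = X (i₀, j₀) (i₀, j₀) ∧ X (i, j) (j, i) = X (i₀, j₀) (j₀, i₀) := by
    intro i j hij
    obtain ⟨σ, rfl, rfl⟩ :=
      MulAction.is_two_pretransitive_iff.1 (Equiv.Perm.isMultiplyPretransitive ι 2) h₀ hij
    exact ⟨hX.apply_perm σ .., hX.apply_perm σ ..⟩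
  refine ⟨X (i₀, j₀) (i₀, j₀), X (i₀, j₀) (j₀, i₀), ?_⟩
  ext ⟨i, j⟩ q
  simp only [add_apply, smul_apply, one_apply, tensorSwap, PEquiv.toMatrix_apply, smul_eq_mul,
    Equiv.toPEquiv_apply, Equiv.prodComm_apply, Prod.swap_prod_mk, Option.mem_def,
    Option.some.injEq, mul_ite, mul_one, mul_zero]
  have hswap : ∀ {p : ι × ι}, p.swap ≠ q → p ≠ q.swap :=
    fun h h' => h (by rw [h', Prod.swap_swap])
  rcases eq_or_ne i j with rfl | hij
  · obtain ⟨k, hk⟩ := exists_ne i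
    by_cases hq : (i, i) = q
    · subst hq
      rw [if_pos rfl, if_pos rfl, hX.apply_diag hk.symm, (offdiag hk.symm).1,
        (offdiag hk.symm).2]
    · rw [if_neg hq, if_neg hq, hX.apply_eq_zero hq (hswap hq), add_zero]
  · by_cases hq : (i, j) = q
    · subst hq
      rw [if_pos rfl, if_neg (by simp [hij]), (offdiag hij).1, add_zero]
    · by_cases hs : (j, i) = q
      · subst hs
        rw [if_neg hq, if_pos rfl, (offdiag hij).2, zero_add]
      · rw [if_neg hq, if_neg hs, hX.apply_eq_zero hq (hswap hs), add_zero]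

end CommutesWithUnitaryKroneckerSquares

end Commutant

theorem trace_mul_vecMulVec {ι R : Type*} [Fintype ι] [CommSemiring R] (M : Matrix ι ι R)
    (x y : ι → R) : trace (M * vecMulVec y x) = x ⬝ᵥ M *ᵥ y := by
  rw [mul_vecMulVec, trace_vecMulVec, dotProduct_comm]

end Matrix

section MatrixIntegral

variable {α 𝕜 l m n o : Type*} [MeasurableSpace α] [RCLike 𝕜]

/-- Matrices carry no global norm, so the integral is taken entrywise. -/
noncomputable def matrixIntegral (μ : Measure α) (F : α → Matrix m n 𝕜) : Matrix m n 𝕜 :=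
  of fun i j => ∫ x, F x i j ∂μ

variable (μ : Measure α) {F : α → Matrix m n 𝕜}

theorem mul_matrixIntegral_mul [Fintype l] [Fintype m] [Fintype n] [Fintype o]
    (K : Matrix l m 𝕜) (L : Matrix n o 𝕜) (hF : ∀ i j, Integrable (fun x => F x i j) μ) :
    K * matrixIntegral μ F * L = matrixIntegral μ fun x => K * F x * L := by
  ext i j
  simp only [matrixIntegral, mul_apply, of_apply, Finset.sum_mul]
  have hint : ∀ r s, Integrable (fun x => K i r * F x r s * L s j) μ :=
    fun r s => ((hF r s).const_mul _).mul_const _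
  rw [integral_finsetSum _ fun s _ => integrable_finsetSum _ fun r _ => hint r s]
  refine Finset.sum_congr rfl fun s _ => ?_
  rw [integral_finsetSum _ fun r _ => hint r s]
  exact Finset.sum_congr rfl fun r _ => by rw [integral_mul_const, integral_const_mul]

theorem trace_matrixIntegral [Fintype n] {F : α → Matrix n n 𝕜}
    (hF : ∀ i j, Integrable (fun x => F x i j) μ) :
    trace (matrixIntegral μ F) = ∫ x, trace (F x) ∂μ :=
  (integral_finsetSum _ fun i _ => hF i i).symm

theorem integrable_apply_of_continuous [TopologicalSpace α] [CompactSpace α]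
    [OpensMeasurableSpace α] [IsFiniteMeasure μ] (hF : Continuous F) (i : m) (j : n) :
    Integrable (fun x => F x i j) μ :=
  (hF.matrix_elem i j).integrable_of_hasCompactSupport (.of_compactSpace _)

theorem matrixIntegral_comp_mul_left {G : Type*} [Group G] [MeasurableSpace G] [MeasurableMul G]
    (μ : Measure G) [μ.IsMulLeftInvariant] (F : G → Matrix m n 𝕜) (g : G) :
    matrixIntegral μ (fun x => F (g * x)) = matrixIntegral μ F := by
  ext i j
  exact integral_mul_left_eq_self (fun x => F x i j) g

end MatrixIntegral

namespace Matrix.UnitaryGroup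

variable {ι 𝕜 : Type*} [Fintype ι] [DecidableEq ι]

theorem isCompact [RCLike 𝕜] : IsCompact (unitaryGroup ι 𝕜 : Set (Matrix ι ι 𝕜)) := by
  have hc : IsClosed (unitaryGroup ι 𝕜 : Set (Matrix ι ι 𝕜)) := isClosed_unitary
  open scoped Matrix.Norms.Elementwise in
  exact (isCompact_closedBall (0 : Matrix ι ι 𝕜) 1).of_isClosed_subset hc
    fun U hU => mem_closedBall_zero_iff.2 (entrywise_sup_norm_bound_of_unitary hU)

instance [RCLike 𝕜] : CompactSpace (unitaryGroup ι 𝕜) :=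
  isCompact_iff_compactSpace.mp isCompact

theorem trace_conjStarAlgAut (V : unitaryGroup ι ℂ) (A : Matrix ι ι ℂ) :
    trace (Unitary.conjStarAlgAut ℂ _ V A) = trace A := by
  rw [Unitary.conjStarAlgAut_apply, trace_mul_cycle, Unitary.coe_star_mul_self, Matrix.one_mul]

theorem continuous_conjStarAlgAut_kronecker (J : Matrix ι ι ℂ) :
    Continuous fun V : unitaryGroup ι ℂ =>
      Unitary.conjStarAlgAut ℂ _ V J ⊗ₖ Unitary.conjStarAlgAut ℂ _ V J := by
  simp only [Unitary.conjStarAlgAut_apply]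
  fun_prop

variable [MeasurableSpace (unitaryGroup ι ℂ)] [BorelSpace (unitaryGroup ι ℂ)]
  (μ : Measure (unitaryGroup ι ℂ)) (J : Matrix ι ι ℂ)

noncomputable def secondMoment : Matrix (ι × ι) (ι × ι) ℂ :=
  matrixIntegral μ fun V => Unitary.conjStarAlgAut ℂ _ V J ⊗ₖ Unitary.conjStarAlgAut ℂ _ V J

theorem commutesWithUnitaryKroneckerSquares_secondMoment [IsFiniteMeasure μ]
    [μ.IsMulLeftInvariant] : CommutesWithUnitaryKroneckerSquares (secondMoment μ J) := by
  intro W hW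
  refine (commute_unitary_iff_star_right_conjugate (kronecker_mem_unitary hW hW)).2 ?_
  rw [secondMoment, star_eq_conjTranspose,
    mul_matrixIntegral_mul _ _ _
      (integrable_apply_of_continuous μ (continuous_conjStarAlgAut_kronecker J)),
    ← matrixIntegral_comp_mul_left μ
      (fun V => Unitary.conjStarAlgAut ℂ _ V J ⊗ₖ Unitary.conjStarAlgAut ℂ _ V J) ⟨W, hW⟩]
  congr 1
  ext1 V
  rw [map_mul, StarAlgEquiv.mul_apply, Unitary.conjStarAlgAut_apply, conjTranspose_kronecker,
    ← mul_kronecker_mul, ← mul_kronecker_mul]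
  rfl

theorem trace_secondMoment_mul [IsFiniteMeasure μ] (L : Matrix (ι × ι) (ι × ι) ℂ) :
    trace (secondMoment μ J * L) =
      ∫ V, trace ((Unitary.conjStarAlgAut ℂ _ V J ⊗ₖ Unitary.conjStarAlgAut ℂ _ V J) * L) ∂μ := by
  rw [← Matrix.one_mul (secondMoment μ J), secondMoment,
    mul_matrixIntegral_mul _ _ _
      (integrable_apply_of_continuous μ (continuous_conjStarAlgAut_kronecker J)),
    trace_matrixIntegral _ (integrable_apply_of_continuous μ
      ((continuous_const.matrix_mul (continuous_conjStarAlgAut_kronecker J)).matrix_mul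
        continuous_const))]
  simp only [Matrix.one_mul]

theorem trace_secondMoment [IsProbabilityMeasure μ] : trace (secondMoment μ J) = trace J ^ 2 := by
  rw [← Matrix.mul_one (secondMoment μ J), trace_secondMoment_mul]
  simp only [Matrix.mul_one, trace_kronecker, trace_conjStarAlgAut, integral_const, probReal_univ,
    one_smul, sq]

theorem trace_secondMoment_mul_tensorSwap [IsProbabilityMeasure μ] :
    trace (secondMoment μ J * tensorSwap ι ℂ) = trace (J * J) := by
  rw [trace_secondMoment_mul]
  simp only [trace_mul_comm _ (tensorSwap ι ℂ), trace_tensorSwap_mul_kronecker, ← map_mul,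
    trace_conjStarAlgAut, integral_const, probReal_univ, one_smul]

theorem secondMoment_eq [Nontrivial ι] [IsProbabilityMeasure μ] [μ.IsMulLeftInvariant] :
    secondMoment μ J =
      ((Fintype.card ι * trace J ^ 2 - trace (J * J)) /
          (Fintype.card ι * (Fintype.card ι ^ 2 - 1))) • 1 +
        ((Fintype.card ι * trace (J * J) - trace J ^ 2) /
          (Fintype.card ι * (Fintype.card ι ^ 2 - 1))) • tensorSwap ι ℂ := by
  obtain ⟨a, b, h⟩ :=
    (commutesWithUnitaryKroneckerSquares_secondMoment μ J).exists_eq_smul_one_add_smul_tensorSwap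
  have e₁ := trace_secondMoment μ J
  have e₂ := trace_secondMoment_mul_tensorSwap μ J
  rw [h] at e₁ e₂ ⊢
  simp only [trace_add, trace_smul, trace_one, trace_tensorSwap, add_mul, smul_mul_assoc,
    Matrix.one_mul, tensorSwap_mul_tensorSwap, smul_eq_mul, Fintype.card_prod,
    Nat.cast_mul] at e₁ e₂
  have hd : (Fintype.card ι : ℂ) * (Fintype.card ι ^ 2 - 1) ≠ 0 :=
    natCast_mul_sq_sub_one_ne_zero Fintype.one_lt_card
  congr 2 <;> rw [eq_div_iff hd]
  · linear_combination (Fintype.card ι : ℂ) * e₁ - e₂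
  · linear_combination (Fintype.card ι : ℂ) * e₂ - e₁

end Matrix.UnitaryGroup

/-- For `d ≥ 2`, an arbitrary `d × d` complex matrix `J`, unit vectors `φ, ξ ∈ ℂ^d`, and `μ` the
normalized Haar probability measure on `U(d)`:
`∫ ⟨ξ, V J Vᴴ φ⟩ ⟨φ, V J Vᴴ ξ⟩ dμ(V)
  = ((Tr J)² |⟨φ,ξ⟩|² + Tr(J²)) / (d² − 1) − (Tr(J²) |⟨φ,ξ⟩|² + (Tr J)²) / (d (d² − 1))`. -/
theorem haar_second_moment_offdiagonal (d : ℕ) (hd : 2 ≤ d)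
    (μ : Measure (Matrix.unitaryGroup (Fin d) ℂ)) [μ.IsHaarMeasure] [IsProbabilityMeasure μ]
    (J : Matrix (Fin d) (Fin d) ℂ)
    (φ ξ : Fin d → ℂ) (hφ : star φ ⬝ᵥ φ = 1) (hξ : star ξ ⬝ᵥ ξ = 1) :
    ∫ V : Matrix.unitaryGroup (Fin d) ℂ,
        (star ξ ⬝ᵥ ((V : Matrix (Fin d) (Fin d) ℂ) * J * (V : Matrix (Fin d) (Fin d) ℂ)ᴴ) *ᵥ φ) *
          (star φ ⬝ᵥ ((V : Matrix (Fin d) (Fin d) ℂ) * J * (V : Matrix (Fin d) (Fin d) ℂ)ᴴ) *ᵥ ξ)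
        ∂μ
      = (J.trace ^ 2 * (‖star φ ⬝ᵥ ξ‖ : ℂ) ^ 2 + (J * J).trace) / ((d : ℂ) ^ 2 - 1)
          - ((J * J).trace * (‖star φ ⬝ᵥ ξ‖ : ℂ) ^ 2 + J.trace ^ 2)
            / ((d : ℂ) * ((d : ℂ) ^ 2 - 1)) := by
  have : Nontrivial (Fin d) := Fin.nontrivial_iff_two_le.2 hd
  have hintegrand : ∀ V : unitaryGroup (Fin d) ℂ,
      (star ξ ⬝ᵥ ((V : Matrix (Fin d) (Fin d) ℂ) * J * (V : Matrix (Fin d) (Fin d) ℂ)ᴴ) *ᵥ φ) *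
          (star φ ⬝ᵥ ((V : Matrix (Fin d) (Fin d) ℂ) * J * (V : Matrix (Fin d) (Fin d) ℂ)ᴴ) *ᵥ ξ) =
        trace ((Unitary.conjStarAlgAut ℂ _ V J ⊗ₖ Unitary.conjStarAlgAut ℂ _ V J) *
          (vecMulVec φ (star ξ) ⊗ₖ vecMulVec ξ (star φ))) := fun V => by
    rw [← mul_kronecker_mul, trace_kronecker, trace_mul_vecMulVec, trace_mul_vecMulVec]
    rfl
  have hnorm : (φ ⬝ᵥ star ξ) * (ξ ⬝ᵥ star φ) = (‖star φ ⬝ᵥ ξ‖ : ℂ) ^ 2 := by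
    rw [dotProduct_comm, star_dotProduct, dotProduct_comm ξ, Complex.star_def, Complex.conj_mul']
  obtain ⟨hd₀, hd₁⟩ := mul_ne_zero_iff.1 (natCast_mul_sq_sub_one_ne_zero hd)
  simp_rw [hintegrand]
  rw [← UnitaryGroup.trace_secondMoment_mul, UnitaryGroup.secondMoment_eq]
  simp only [add_mul, smul_mul_assoc, Matrix.one_mul, trace_add, trace_smul, trace_kronecker,
    trace_tensorSwap_mul_kronecker, vecMulVec_mul_vecMulVec, hξ, one_smul, trace_vecMulVec,
    smul_eq_mul]
  rw [dotProduct_comm φ (star φ), hφ, hnorm, Fintype.card_fin]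
  field_simp
  ring
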